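/- A K-noetherian K-integral graded ring R is a K-Krull ring if and only if it is K-normal. -/

import Mathlib

/-!
Krull ⇒ normal: if `x = a / s` is homogeneous and integral over `R`, then `s ^ n * x ^ m ∈ R` for a
fixed `n` and every `m`, so each valuation `v` of the defining family satisfies
`n * v s + m * v x ≥ 0` for all `m`; hence `v x ≥ 0`, and `x ∈ R`.

Normal ⇒ Krull: work in the group `Γ` of homogeneous units of `Q⁺(R)` and its submonoid `M` of
nonzero homogeneous elements of `R`. Normality and the graded chain condition make `M` completely
integrally closed in `Γ`, so the divisorial fractional ideals of `M` form a group, and the chain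
condition passes to the integral ones, which therefore factor uniquely into maximal divisorial
ideals. The exponent of a maximal `p` in the principal ideal of `g ∈ Γ` is a discrete valuation
`v_p`, and `M = {g | ∀ p, v_p g ≥ 0}`. The valuation inequality for sums holds because `x + y`
lies in every divisorial ideal containing `x` and `y`.
-/

section

universe u v

variable {K : Type v} {R : Type u} [AddCommGroup K] [DecidableEq K] [CommRing R]
  (𝒜 : K → AddSubgroup R) [GradedRing 𝒜]

/-- The multiplicative set of nonzero homogeneous elements. -/
def homNonzeroSub : Submonoid R :=
  Submonoid.closure {r : R | SetLike.IsHomogeneousElem 𝒜 r ∧ r ≠ 0}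

/-- The homogeneous fraction ring `Q⁺(R) = (R⁺)⁻¹R`. -/
abbrev QPlus := Localization (homNonzeroSub 𝒜)

/-- Homogeneous elements of `Q⁺(R)`: fractions of homogeneous elements. -/
def HomFrac (x : QPlus 𝒜) : Prop :=
  ∃ (r s : R) (hs : s ∈ homNonzeroSub 𝒜),
    SetLike.IsHomogeneousElem 𝒜 r ∧ SetLike.IsHomogeneousElem 𝒜 s ∧ x = Localization.mk r ⟨s, hs⟩

/-- A discrete `K`-valuation on `Q⁺(R)`: a surjection onto `ℤ`, additive on products of
nonzero homogeneous elements, satisfying the valuation inequality on homogeneous sums. -/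
def IsKVal (ν : QPlus 𝒜 → ℤ) : Prop :=
  (∀ x y : QPlus 𝒜, HomFrac 𝒜 x → HomFrac 𝒜 y → x ≠ 0 → y ≠ 0 →
    ν (x * y) = ν x + ν y) ∧
  (∀ x y : QPlus 𝒜, HomFrac 𝒜 x → HomFrac 𝒜 y → HomFrac 𝒜 (x + y) →
    x ≠ 0 → y ≠ 0 → x + y ≠ 0 → min (ν x) (ν y) ≤ ν (x + y)) ∧
  (∀ n : ℤ, ∃ x : QPlus 𝒜, HomFrac 𝒜 x ∧ x ≠ 0 ∧ ν x = n)

/-- `R` is a `K`-Krull ring: it is defined inside `Q⁺(R)` by a family of discrete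
`K`-valuations of finite character. -/
def IsKKrullRing : Prop :=
  ∃ (ι : Type u) (ν : ι → QPlus 𝒜 → ℤ),
    (∀ i, IsKVal 𝒜 (ν i)) ∧
    (∀ x : QPlus 𝒜, HomFrac 𝒜 x → x ≠ 0 → {i : ι | ν i x ≠ 0}.Finite) ∧
    (∀ x : QPlus 𝒜, HomFrac 𝒜 x → x ≠ 0 →
      ((∀ i, 0 ≤ ν i x) ↔ ∃ r : R, algebraMap R (QPlus 𝒜) r = x))

/-- `R` is `K`-normal: every homogeneous fraction integral over `R` lies in `R`. -/
def KNormalRing : Prop :=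
  ∀ x : QPlus 𝒜, HomFrac 𝒜 x → IsIntegral R x → ∃ r : R, algebraMap R (QPlus 𝒜) r = x

/-- `R` is `K`-noetherian: ascending chains of `K`-graded ideals stabilize. -/
def KNoetherian : Prop :=
  ∀ f : ℕ →o Ideal R, (∀ n, (f n).IsHomogeneous 𝒜) → ∃ n, ∀ m, n ≤ m → f m = f n

/-- `R` is `K`-integral: no homogeneous zero divisors. -/
def KIntegralRing : Prop :=
  ∀ a b : R, SetLike.IsHomogeneousElem 𝒜 a → SetLike.IsHomogeneousElem 𝒜 b → a * b = 0 → a = 0 ∨ b = 0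

section

open scoped Pointwise

namespace Submonoid

variable {Γ : Type*} [CommGroup Γ] (M : Submonoid Γ)

def colon (S : Set Γ) : Set Γ := {h | ∀ s ∈ S, h * s ∈ M}

/-- The `v`-operation of divisorial ideal theory. -/
def vClosure (S : Set Γ) : Set Γ := M.colon (M.colon S)

def IsCompletelyIntegrallyClosed : Prop :=
  ∀ g : Γ, (∃ c, ∀ n : ℕ, c * g ^ n ∈ M) → g ∈ M

def IsGroupOfFractions : Prop := ∀ g : Γ, ∃ b ∈ M, g * b ∈ M

variable {M} {S T : Set Γ}

lemma colon_anti (h : S ⊆ T) : M.colon T ⊆ M.colon S := fun _ hx s hs => hx s (h hs)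

lemma subset_vClosure : S ⊆ M.vClosure S := fun s hs _ hh => mul_comm s _ ▸ hh s hs

lemma vClosure_mono (h : S ⊆ T) : M.vClosure S ⊆ M.vClosure T := colon_anti (colon_anti h)

lemma colon_vClosure : M.colon (M.vClosure S) = M.colon S :=
  (colon_anti subset_vClosure).antisymm subset_vClosure

lemma vClosure_vClosure : M.vClosure (M.vClosure S) = M.vClosure S :=
  congrArg M.colon colon_vClosure

lemma vClosure_subset (hT : M.vClosure T = T) (h : S ⊆ T) : M.vClosure S ⊆ T :=
  hT ▸ vClosure_mono h

lemma colon_coe : M.colon M = M :=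
  Set.ext fun h => ⟨fun hh => mul_one h ▸ hh 1 M.one_mem, fun hh _ hs => M.mul_mem hh hs⟩

lemma vClosure_coe : M.vClosure M = M := by
  rw [vClosure, colon_coe, colon_coe]

lemma mul_mem_colon {m h : Γ} (hm : m ∈ M) (hh : h ∈ M.colon S) : m * h ∈ M.colon S :=
  fun s hs => mul_assoc m h s ▸ M.mul_mem hm (hh s hs)

lemma mul_mem_of_mem_vClosure {c x : Γ} (hc : c ∈ M.colon S) (hx : x ∈ M.vClosure S) :
    c * x ∈ M :=
  mul_comm x c ▸ hx c hc

lemma vClosure_mul_subset : M.vClosure S * T ⊆ M.vClosure (S * T) := by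
  rintro - ⟨x, hx, t, ht, rfl⟩ c hc
  have hct : c * t ∈ M.colon S := fun s hs => by
    simpa only [mul_right_comm c t s, mul_assoc, mul_comm t s] using hc _ (Set.mul_mem_mul hs ht)
  simpa only [mul_comm, mul_left_comm] using mul_mem_of_mem_vClosure hct hx

lemma vClosure_vClosure_mul : M.vClosure (M.vClosure S * T) = M.vClosure (S * T) :=
  (vClosure_subset vClosure_vClosure vClosure_mul_subset).antisymm
    (vClosure_mono (Set.mul_subset_mul_right subset_vClosure))

end Submonoid

open Submonoid

variable {Γ : Type*} [CommGroup Γ] (M : Submonoid Γ)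

structure DivisorialIdeal where
  carrier : Set Γ
  carrier_nonempty : carrier.Nonempty
  colon_nonempty : (M.colon carrier).Nonempty
  vClosure_carrier : M.vClosure carrier = carrier

namespace DivisorialIdeal

variable {M}

instance : SetLike (DivisorialIdeal M) Γ where
  coe := carrier
  coe_injective A B h := by cases A; cases B; congr

instance : PartialOrder (DivisorialIdeal M) := .ofSetLike (DivisorialIdeal M) Γ

variable {A B C : DivisorialIdeal M} {S : Set Γ} {x g : Γ}

lemma vClosure_coe_eq (A : DivisorialIdeal M) : M.vClosure A = A := A.vClosure_carrier

lemma mul_mem {m a : Γ} (hm : m ∈ M) (ha : a ∈ A) : m * a ∈ A :=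
  A.vClosure_coe_eq.subset (mul_mem_colon hm (A.vClosure_coe_eq.superset ha))

def span (S : Set Γ) (hS : S.Nonempty) (hS' : (M.colon S).Nonempty) : DivisorialIdeal M where
  carrier := M.vClosure S
  carrier_nonempty := hS.mono subset_vClosure
  colon_nonempty := by rw [colon_vClosure]; exact hS'
  vClosure_carrier := vClosure_vClosure

lemma subset_span {hS : S.Nonempty} {hS' : (M.colon S).Nonempty} : S ⊆ span S hS hS' :=
  subset_vClosure

lemma span_le {hS : S.Nonempty} {hS' : (M.colon S).Nonempty} : span S hS hS' ≤ A ↔ S ⊆ A :=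
  ⟨fun h => subset_span.trans h, fun h => vClosure_subset A.vClosure_coe_eq h⟩

instance : One (DivisorialIdeal M) where
  one := ⟨M, ⟨1, M.one_mem⟩, by rw [colon_coe]; exact ⟨1, M.one_mem⟩, vClosure_coe⟩

instance : Mul (DivisorialIdeal M) where
  mul A B := span (A * B : Set Γ) (A.carrier_nonempty.mul B.carrier_nonempty) <| by
    obtain ⟨c, hc⟩ := A.colon_nonempty
    obtain ⟨d, hd⟩ := B.colon_nonempty
    refine ⟨c * d, ?_⟩
    rintro - ⟨a, ha, b, hb, rfl⟩
    simpa only [mul_mul_mul_comm] using M.mul_mem (hc a ha) (hd b hb)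

lemma mul_mem_mul {a b : Γ} (ha : a ∈ A) (hb : b ∈ B) : a * b ∈ A * B :=
  subset_vClosure (Set.mul_mem_mul ha hb)

lemma mul_le_iff : A * B ≤ C ↔ ∀ a ∈ A, ∀ b ∈ B, a * b ∈ C := by
  refine span_le.trans ⟨fun h a ha b hb => h (Set.mul_mem_mul ha hb), ?_⟩
  rintro h - ⟨a, ha, b, hb, rfl⟩
  exact h a ha b hb

instance : CommMonoid (DivisorialIdeal M) where
  mul_assoc A B C := SetLike.coe_injective <| by
    change M.vClosure (M.vClosure (A * B : Set Γ) * C) = M.vClosure (A * M.vClosure (B * C : Set Γ))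
    rw [vClosure_vClosure_mul, mul_comm (A : Set Γ) (M.vClosure _), vClosure_vClosure_mul,
      mul_assoc, mul_comm (B * C : Set Γ)]
  mul_comm A B := SetLike.coe_injective <| by
    change M.vClosure (A * B : Set Γ) = M.vClosure (B * A : Set Γ)
    rw [mul_comm]
  one_mul A := le_antisymm (mul_le_iff.2 fun _ hm _ ha => A.mul_mem hm ha)
    fun a ha => one_mul a ▸ mul_mem_mul (one_mem M) ha
  mul_one A := le_antisymm (mul_le_iff.2 fun _ ha _ hm => by rw [mul_comm]; exact A.mul_mem hm ha)
    fun a ha => mul_one a ▸ mul_mem_mul ha (one_mem M)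

instance : IsOrderedMonoid (DivisorialIdeal M) where
  mul_le_mul_left _ _ h _ := mul_le_iff.2 fun _ ha _ hc => mul_mem_mul (h ha) hc

instance : Inv (DivisorialIdeal M) where
  inv A := ⟨M.colon A, A.colon_nonempty, A.carrier_nonempty.mono subset_vClosure,
    colon_vClosure (S := (A : Set Γ))⟩

lemma mul_inv_le_one_of_le (h : A ≤ B) : A * B⁻¹ ≤ 1 :=
  mul_le_iff.2 fun a ha _ hb => mul_comm a _ ▸ hb a (h ha)

lemma one_le_inv (h : A ≤ 1) : 1 ≤ A⁻¹ := fun _ hm _ ha => M.mul_mem hm (h ha)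

lemma mul_inv_cancel (hM : M.IsCompletelyIntegrallyClosed) (A : DivisorialIdeal M) :
    A * A⁻¹ = 1 := by
  refine le_antisymm (mul_inv_le_one_of_le le_rfl) fun m hm h hh => M.mul_mem hm ?_
  obtain ⟨a, ha⟩ := A.carrier_nonempty
  obtain ⟨b, hb⟩ := A.colon_nonempty
  -- `h` stabilises `A⁻¹`, so `h ^ n * b ∈ A⁻¹` for all `n`
  have hpow : ∀ n : ℕ, h ^ n * b ∈ A⁻¹ := by
    intro n
    induction n with
    | zero => rw [pow_zero, one_mul]; exact hb
    | succ n ih =>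
      intro x hx
      rw [show h ^ (n + 1) * b * x = h * (x * (h ^ n * b)) by rw [pow_succ]; ac_rfl]
      exact hh _ (Set.mul_mem_mul hx ih)
  refine hM h ⟨a * b, fun n => ?_⟩
  rw [show a * b * h ^ n = h ^ n * b * a by ac_rfl]
  exact hpow n a ha

lemma mul_left_cancel (hM : M.IsCompletelyIntegrallyClosed) (h : A * B = A * C) : B = C := by
  simpa only [← mul_assoc, mul_comm A⁻¹ A, mul_inv_cancel hM, one_mul] using congrArg (A⁻¹ * ·) h

lemma prod_le_one {l : Multiset (DivisorialIdeal M)} (hl : ∀ q ∈ l, q ≤ 1) : l.prod ≤ 1 :=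
  (Multiset.prod_le_pow_card l 1 hl).trans_eq (one_pow _)

lemma prod_le_of_mem {l : Multiset (DivisorialIdeal M)} (hl : ∀ q ∈ l, q ≤ 1) (hA : A ∈ l) :
    l.prod ≤ A := by
  classical
  rw [← Multiset.cons_erase hA, Multiset.prod_cons]
  exact mul_le_of_le_one_right' (prod_le_one fun q hq => hl q (Multiset.mem_of_mem_erase hq))

def IsMaximal (p : DivisorialIdeal M) : Prop := p < 1 ∧ ∀ B, p ≤ B → B < 1 → B = p

variable {p q : DivisorialIdeal M}

lemma IsMaximal.le_one (hp : p.IsMaximal) : p ≤ 1 := hp.1.le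

lemma IsMaximal.eq_of_le (hp : p.IsMaximal) (hq : q.IsMaximal) (h : p ≤ q) : q = p :=
  hp.2 q h hq.1

lemma IsMaximal.mem_or_mem (hp : p.IsMaximal) {x y : Γ} (hx : x ∈ M) (hy : y ∈ M)
    (hxy : x * y ∈ p) : x ∈ p ∨ y ∈ p := by
  -- the divisorial ideal `J` generated by `p` and `x` is `1`, and `y` maps its generators into `p`
  refine or_iff_not_imp_left.2 fun hxp => ?_
  have hsub : insert x (p : Set Γ) ⊆ M := Set.insert_subset hx hp.le_one
  let J := span (insert x (p : Set Γ)) (Set.insert_nonempty _ _)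
    ⟨1, fun s hs => (one_mul s).symm ▸ hsub hs⟩
  have hxJ : x ∈ J := subset_span (Set.mem_insert x _)
  have hJ : J = 1 := by
    by_contra hJ
    have := hp.2 J (fun a ha => subset_span (Set.mem_insert_of_mem x ha))
      ((span_le.2 hsub).lt_of_ne hJ)
    exact hxp (this ▸ hxJ)
  rw [← SetLike.mem_coe, ← p.vClosure_coe_eq]
  intro h hh
  have hyh : y * h ∈ M.colon (insert x (p : Set Γ)) := by
    rintro s (rfl | hs)
    · simpa only [mul_comm, mul_left_comm] using hh _ hxy
    · simpa only [mul_assoc] using M.mul_mem hy (hh s hs)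
  simpa using mul_mem_of_mem_vClosure hyh (show (1 : Γ) ∈ J from hJ ▸ M.one_mem)

lemma IsMaximal.mem_of_prod_le (hp : p.IsMaximal) {l : Multiset (DivisorialIdeal M)}
    (hl : ∀ q ∈ l, q.IsMaximal) (h : l.prod ≤ p) : p ∈ l := by
  induction l using Multiset.induction_on with
  | empty => exact absurd (h.trans_lt hp.1) (lt_irrefl _)
  | cons q l ih =>
    have hq := hl q (Multiset.mem_cons_self q l)
    have hl' := fun r hr => hl r (Multiset.mem_cons_of_mem hr)
    rw [Multiset.prod_cons] at h
    by_cases hqp : q ≤ p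
    · exact hq.eq_of_le hp hqp ▸ Multiset.mem_cons_self q l
    obtain ⟨x, hxq, hxp⟩ := SetLike.not_le_iff_exists.1 hqp
    refine Multiset.mem_cons_of_mem (ih hl' fun z hz => ?_)
    have hzM : z ∈ M := prod_le_one (fun r hr => (hl' r hr).le_one) hz
    exact (hp.mem_or_mem (hq.le_one hxq) hzM (h (mul_mem_mul hxq hz))).resolve_left hxp

lemma eq_of_prod_eq (hM : M.IsCompletelyIntegrallyClosed) {l₁ l₂ : Multiset (DivisorialIdeal M)}
    (h₁ : ∀ q ∈ l₁, q.IsMaximal) (h₂ : ∀ q ∈ l₂, q.IsMaximal) (h : l₁.prod = l₂.prod) :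
    l₁ = l₂ := by
  classical
  induction l₁ using Multiset.induction_on generalizing l₂ with
  | empty =>
    obtain rfl | ⟨q, hq⟩ := Multiset.empty_or_exists_mem l₂
    · rfl
    refine absurd ?_ (h₂ q hq).1.not_ge
    rw [← Multiset.prod_zero, h]
    exact prod_le_of_mem (fun r hr => (h₂ r hr).le_one) hq
  | cons p l₁ ih =>
    rw [Multiset.prod_cons] at h
    have hp := h₁ p (Multiset.mem_cons_self p l₁)
    have hpl₂ : p ∈ l₂ := hp.mem_of_prod_le h₂ (h ▸ mul_le_of_le_one_right'
      (prod_le_one fun r hr => (h₁ r (Multiset.mem_cons_of_mem hr)).le_one))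
    rw [← Multiset.cons_erase hpl₂, Multiset.prod_cons] at h
    rw [← Multiset.cons_erase hpl₂]
    rw [ih (fun r hr => h₁ r (Multiset.mem_cons_of_mem hr))
      (fun r hr => h₂ r (Multiset.mem_of_mem_erase hr)) (mul_left_cancel hM h)]

lemma exists_le_isMaximal [WellFoundedGT (Set.Iic (1 : DivisorialIdeal M))] (hA : A < 1) :
    ∃ p : DivisorialIdeal M, p.IsMaximal ∧ A ≤ p := by
  obtain ⟨⟨p, _⟩, ⟨hAp, hp⟩, hmax⟩ :=
    (wellFounded_gt (α := Set.Iic (1 : DivisorialIdeal M))).has_min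
      {B | A ≤ B.1 ∧ B.1 < 1} ⟨⟨A, hA.le⟩, le_rfl, hA⟩
  refine ⟨p, ⟨hp, fun B hpB hB => ?_⟩, hAp⟩
  exact (hpB.eq_or_lt.resolve_right fun h => hmax ⟨B, hB.le⟩ ⟨hAp.trans hpB, hB⟩ h).symm

lemma exists_prod_eq [WellFoundedGT (Set.Iic (1 : DivisorialIdeal M))]
    (hM : M.IsCompletelyIntegrallyClosed) (hA : A ≤ 1) :
    ∃ l : Multiset (DivisorialIdeal M), (∀ q ∈ l, q.IsMaximal) ∧ l.prod = A := by
  suffices ∀ A : Set.Iic (1 : DivisorialIdeal M),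
      ∃ l : Multiset (DivisorialIdeal M), (∀ q ∈ l, q.IsMaximal) ∧ l.prod = A from this ⟨A, hA⟩
  intro A
  induction A using WellFoundedGT.induction with
  | _ A ih =>
  obtain ⟨A, hA⟩ := A
  obtain rfl | hA1 := (Set.mem_Iic.1 hA).eq_or_lt
  · exact ⟨0, by simp, Multiset.prod_zero⟩
  obtain ⟨p, hp, hAp⟩ := exists_le_isMaximal hA1
  -- peel off one maximal factor: `A * p⁻¹` is integral and strictly larger than `A`
  have hlt : A < A * p⁻¹ := by
    refine (le_mul_of_one_le_right' (one_le_inv hp.le_one)).lt_of_ne fun h => hp.1.ne ?_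
    have h1 : 1 = p⁻¹ := mul_left_cancel hM ((mul_one A).trans h)
    rw [← mul_inv_cancel hM p, ← h1, mul_one]
  obtain ⟨l, hl, hprod⟩ := ih ⟨_, mul_inv_le_one_of_le hAp⟩ hlt
  refine ⟨p ::ₘ l, Multiset.forall_mem_cons.2 ⟨hp, hl⟩, ?_⟩
  rw [Multiset.prod_cons, hprod, mul_left_comm, mul_inv_cancel hM, mul_one]

open Classical in
/-- The factorisation of `A` into maximal divisorial ideals (`0` if there is none). -/
noncomputable def factors (A : DivisorialIdeal M) : Multiset (DivisorialIdeal M) :=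
  if h : ∃ l : Multiset (DivisorialIdeal M), (∀ q ∈ l, q.IsMaximal) ∧ l.prod = A then h.choose
  else 0

open Classical in
noncomputable def count (p A : DivisorialIdeal M) : ℕ := (factors A).count p

lemma factors_eq (hM : M.IsCompletelyIntegrallyClosed) {l : Multiset (DivisorialIdeal M)}
    (hl : ∀ q ∈ l, q.IsMaximal) (h : l.prod = A) : factors A = l := by
  have hex : ∃ l : Multiset (DivisorialIdeal M), (∀ q ∈ l, q.IsMaximal) ∧ l.prod = A := ⟨l, hl, h⟩
  rw [factors, dif_pos hex]
  exact eq_of_prod_eq hM hex.choose_spec.1 hl (hex.choose_spec.2.trans h.symm)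

lemma count_one (hM : M.IsCompletelyIntegrallyClosed) : count p 1 = 0 := by
  simp [count, factors_eq hM (l := 0) (by simp) Multiset.prod_zero]

lemma count_self (hM : M.IsCompletelyIntegrallyClosed) (hp : p.IsMaximal) : count p p = 1 := by
  simp [count, factors_eq hM (l := {p}) (by simpa using hp) (Multiset.prod_singleton p)]

lemma count_eq_zero_of_ne (hM : M.IsCompletelyIntegrallyClosed) (hq : q.IsMaximal) (h : p ≠ q) :
    count p q = 0 := by
  simp [count, factors_eq hM (l := {q}) (by simpa using hq) (Multiset.prod_singleton q), h]

def principal (g : Γ) : DivisorialIdeal M :=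
  span {g} (Set.singleton_nonempty g)
    ⟨g⁻¹, fun s hs => by rw [Set.mem_singleton_iff.1 hs, inv_mul_cancel]; exact M.one_mem⟩

lemma mem_principal : x ∈ (principal g : DivisorialIdeal M) ↔ g⁻¹ * x ∈ M := by
  refine ⟨fun hx => mul_mem_of_mem_vClosure (fun s hs => ?_) hx, fun hx h hh => ?_⟩
  · rw [Set.mem_singleton_iff.1 hs, inv_mul_cancel]; exact M.one_mem
  · simpa [mul_comm, mul_left_comm] using M.mul_mem hx (hh g rfl)

lemma mem_principal_self (g : Γ) : g ∈ principal (M := M) g := subset_span rfl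

lemma principal_le_iff : principal g ≤ A ↔ g ∈ A := span_le.trans Set.singleton_subset_iff

lemma principal_le_one_iff : (principal g : DivisorialIdeal M) ≤ 1 ↔ g ∈ M := principal_le_iff

lemma principal_mul (g h : Γ) : principal (M := M) (g * h) = principal g * principal h := by
  refine le_antisymm
    (principal_le_iff.2 (mul_mem_mul (mem_principal_self g) (mem_principal_self h)))
    (mul_le_iff.2 fun a ha b hb => mem_principal.2 ?_)
  rw [mul_inv, mul_mul_mul_comm]
  exact M.mul_mem (mem_principal.1 ha) (mem_principal.1 hb)

@[simp] lemma principal_one : principal (M := M) 1 = 1 :=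
  SetLike.ext fun _ => by rw [mem_principal, inv_one, one_mul]; rfl

variable [WellFoundedGT (Set.Iic (1 : DivisorialIdeal M))]

lemma factors_spec (hM : M.IsCompletelyIntegrallyClosed) (hA : A ≤ 1) :
    (∀ q ∈ factors A, q.IsMaximal) ∧ (factors A).prod = A := by
  obtain ⟨l, hl, h⟩ := exists_prod_eq hM hA
  rw [factors_eq hM hl h]
  exact ⟨hl, h⟩

lemma count_mul (hM : M.IsCompletelyIntegrallyClosed) (hA : A ≤ 1) (hB : B ≤ 1) :
    count p (A * B) = count p A + count p B := by
  have hAB := factors_eq hM (l := factors A + factors B)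
    (fun q hq => (Multiset.mem_add.1 hq).elim ((factors_spec hM hA).1 q) ((factors_spec hM hB).1 q))
    (by rw [Multiset.prod_add, (factors_spec hM hA).2, (factors_spec hM hB).2])
  simp only [count, hAB, Multiset.count_add]

lemma count_pow (hM : M.IsCompletelyIntegrallyClosed) (hA : A ≤ 1) (k : ℕ) :
    count p (A ^ k) = k * count p A := by
  induction k with
  | zero => simp [count_one hM]
  | succ k ih => rw [pow_succ, count_mul hM (pow_le_one' hA k) hA, ih, add_one_mul]

lemma count_eq_zero_of_not_isMaximal (hM : M.IsCompletelyIntegrallyClosed) (hA : A ≤ 1)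
    (hp : ¬p.IsMaximal) : count p A = 0 := by
  classical
  exact Multiset.count_eq_zero.2 fun h => hp ((factors_spec hM hA).1 p h)

lemma le_iff_forall_count_le (hM : M.IsCompletelyIntegrallyClosed) (hA : A ≤ 1) (hB : B ≤ 1) :
    A ≤ B ↔ ∀ p : DivisorialIdeal M, p.IsMaximal → count p B ≤ count p A := by
  classical
  constructor
  · intro h p _
    have hA' : A = A * B⁻¹ * B := by rw [mul_assoc, mul_comm B⁻¹, mul_inv_cancel hM, mul_one]
    rw [hA', count_mul hM (mul_inv_le_one_of_le h) hB]
    exact Nat.le_add_left _ _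
  · intro h
    have hle : factors B ≤ factors A := Multiset.le_iff_count.2 fun p =>
      if hp : p.IsMaximal then h p hp
      else (count_eq_zero_of_not_isMaximal hM hB hp).trans_le (Nat.zero_le _)
    rw [← (factors_spec hM hA).2, ← add_tsub_cancel_of_le hle, Multiset.prod_add,
      (factors_spec hM hB).2]
    refine mul_le_of_le_one_right' (prod_le_one fun q hq => ?_)
    exact ((factors_spec hM hA).1 q (Multiset.mem_of_le tsub_le_self hq)).le_one

lemma IsMaximal.exists_count_principal_eq_one (hM : M.IsCompletelyIntegrallyClosed)
    (hp : p.IsMaximal) : ∃ a ∈ M, count p (principal a) = 1 := by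
  have hpp : p * p < p := (mul_le_of_le_one_right' hp.le_one).lt_of_ne fun h =>
    hp.1.ne (mul_left_cancel hM (h.trans (mul_one p).symm))
  obtain ⟨a, hap, happ⟩ := SetLike.exists_of_lt hpp
  have ha : principal a ≤ 1 := principal_le_one_iff.2 (hp.le_one hap)
  refine ⟨a, hp.le_one hap, le_antisymm ?_ ?_⟩
  · by_contra! h2
    refine happ (principal_le_iff.1 ((le_iff_forall_count_le hM ha
      (mul_le_one' hp.le_one hp.le_one)).2 fun q hq => ?_))
    rw [count_mul hM hp.le_one hp.le_one]
    obtain rfl | hqp := eq_or_ne q p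
    · rw [count_self hM hq]; omega
    · rw [count_eq_zero_of_ne hM hp hqp]; omega
  · simpa [count_self hM hp] using
      (le_iff_forall_count_le hM ha hp.le_one).1 (principal_le_iff.2 hap) p hp

lemma min_count_le_count (hM : M.IsCompletelyIntegrallyClosed) (hp : p.IsMaximal) {a₁ a₂ a₃ : Γ}
    (ha₁ : a₁ ∈ M) (ha₂ : a₂ ∈ M) (ha₃ : a₃ ∈ M.vClosure {a₁, a₂}) :
    min (count p (principal a₁)) (count p (principal a₂)) ≤ count p (principal a₃) := by
  classical
  have hsub : ({a₁, a₂} : Set Γ) ⊆ M := Set.insert_subset ha₁ (Set.singleton_subset_iff.2 ha₂)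
  let D := span {a₁, a₂} (Set.insert_nonempty _ _) ⟨1, fun s hs => (one_mul s).symm ▸ hsub hs⟩
  have hD : D ≤ 1 := span_le.2 hsub
  have hDa : ∀ a ∈ D, ∀ q, q.IsMaximal → count q D ≤ count q (principal a) := fun a ha =>
    (le_iff_forall_count_le hM (principal_le_one_iff.2 (hD ha)) hD).1 (principal_le_iff.2 ha)
  set n := min (count p (principal a₁)) (count p (principal a₂))
  -- compare `D` with `D * p ^ k`: same `q`-counts for `q ≠ p`, and `p`-count at least `n`
  set k := n - count p D
  have hE : D * p ^ k ≤ 1 := mul_le_one' hD (pow_le_one' hp.le_one k)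
  have hcount : ∀ q, q.IsMaximal → count q (D * p ^ k) = count q D + if q = p then k else 0 := by
    intro q _
    rw [count_mul hM hD (pow_le_one' hp.le_one k), count_pow hM hp.le_one]
    split_ifs with h
    · rw [h, count_self hM hp, mul_one]
    · rw [count_eq_zero_of_ne hM hp h, mul_zero]
  have hmem : ∀ a ∈ ({a₁, a₂} : Set Γ), n ≤ count p (principal a) → a ∈ D * p ^ k := by
    intro a ha hna
    refine principal_le_iff.1 ((le_iff_forall_count_le hM (principal_le_one_iff.2 (hsub ha)) hE).2
      fun q hq => ?_)
    have := hDa a (subset_span ha) q hq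
    rw [hcount q hq]
    split_ifs with h
    · subst h; omega
    · omega
  have hDE : D ≤ D * p ^ k := span_le.2 (Set.insert_subset (hmem a₁ (.inl rfl) (min_le_left _ _))
    (Set.singleton_subset_iff.2 (hmem a₂ (.inr rfl) (min_le_right _ _))))
  have := (le_iff_forall_count_le hM hD hE).1 hDE p hp
  rw [hcount p hp, if_pos rfl] at this
  have := hDa a₃ ha₃ p hp
  omega

open Classical in
/-- `ord p (a / b) = count p (principal a) - count p (principal b)` for `a, b ∈ M`; `0` if `g`
has no denominator in `M`. -/
noncomputable def ord (p : DivisorialIdeal M) (g : Γ) : ℤ :=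
  if h : ∃ b ∈ M, g * b ∈ M then count p (principal (g * h.choose)) - count p (principal h.choose)
  else 0

lemma ord_eq (hM : M.IsCompletelyIntegrallyClosed) {b : Γ} (hb : b ∈ M) (hgb : g * b ∈ M) :
    ord p g = count p (principal (g * b)) - count p (principal b) := by
  have h : ∃ b ∈ M, g * b ∈ M := ⟨b, hb, hgb⟩
  rw [ord, dif_pos h]
  obtain ⟨hc, hgc⟩ := h.choose_spec
  set c := h.choose
  have key : principal (g * c) * principal b =
      (principal (g * b) * principal c : DivisorialIdeal M) := by
    rw [← principal_mul, ← principal_mul, mul_right_comm]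
  have := congrArg (count p) key
  rw [count_mul hM (principal_le_one_iff.2 hgc) (principal_le_one_iff.2 hb),
    count_mul hM (principal_le_one_iff.2 hgb) (principal_le_one_iff.2 hc)] at this
  omega

lemma ord_of_mem (hM : M.IsCompletelyIntegrallyClosed) (hg : g ∈ M) :
    ord p g = count p (principal g) := by
  rw [ord_eq hM M.one_mem ((mul_one g).symm ▸ hg), mul_one, principal_one, count_one hM,
    Nat.cast_zero, sub_zero]

lemma ord_mul (hM : M.IsCompletelyIntegrallyClosed) (hΓ : M.IsGroupOfFractions) (h : Γ) :
    ord p (g * h) = ord p g + ord p h := by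
  obtain ⟨b, hb, hgb⟩ := hΓ g
  obtain ⟨c, hc, hhc⟩ := hΓ h
  have hghbc : g * h * (b * c) ∈ M := mul_mul_mul_comm g h b c ▸ M.mul_mem hgb hhc
  rw [ord_eq hM hb hgb, ord_eq hM hc hhc, ord_eq hM (M.mul_mem hb hc) hghbc, mul_mul_mul_comm,
    principal_mul (g * b), principal_mul b, count_mul hM (principal_le_one_iff.2 hgb)
      (principal_le_one_iff.2 hhc), count_mul hM (principal_le_one_iff.2 hb)
      (principal_le_one_iff.2 hc)]
  push_cast
  ring

lemma ord_zpow (hM : M.IsCompletelyIntegrallyClosed) (hΓ : M.IsGroupOfFractions) (g : Γ) (n : ℤ) :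
    ord p (g ^ n) = n * ord p g := by
  let f : Γ →* Multiplicative ℤ :=
    { toFun := fun g => .ofAdd (ord p g)
      map_one' := by simp [ord_of_mem hM M.one_mem, count_one hM]
      map_mul' := fun g h => by simp [ord_mul hM hΓ] }
  simpa [f] using congrArg Multiplicative.toAdd (map_zpow f g n)

lemma ord_surjective (hM : M.IsCompletelyIntegrallyClosed) (hΓ : M.IsGroupOfFractions)
    (hp : p.IsMaximal) : Function.Surjective (ord p) := by
  obtain ⟨a, ha, h1⟩ := hp.exists_count_principal_eq_one hM
  exact fun n => ⟨a ^ n, by simp [ord_zpow hM hΓ, ord_of_mem hM ha, h1]⟩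

lemma finite_setOf_ord_ne_zero (hM : M.IsCompletelyIntegrallyClosed)
    (hΓ : M.IsGroupOfFractions) (g : Γ) : {p : DivisorialIdeal M | ord p g ≠ 0}.Finite := by
  classical
  obtain ⟨b, hb, hgb⟩ := hΓ g
  refine (factors (principal (g * b)) + factors (principal b)).toFinset.finite_toSet.subset
    fun p hp => ?_
  rw [Set.mem_ofPred_eq, ord_eq hM hb hgb, sub_ne_zero, Ne, Nat.cast_inj] at hp
  simp only [Finset.mem_coe, Multiset.mem_toFinset, Multiset.mem_add]
  by_contra! h
  exact hp ((Multiset.count_eq_zero.2 h.1).trans (Multiset.count_eq_zero.2 h.2).symm)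

lemma mem_iff_forall_ord_nonneg (hM : M.IsCompletelyIntegrallyClosed) (hΓ : M.IsGroupOfFractions) :
    g ∈ M ↔ ∀ p : DivisorialIdeal M, p.IsMaximal → 0 ≤ ord p g := by
  refine ⟨fun hg p _ => ord_of_mem hM hg ▸ Int.natCast_nonneg _, fun h => ?_⟩
  obtain ⟨b, hb, hgb⟩ := hΓ g
  have hle : (principal (g * b) : DivisorialIdeal M) ≤ principal b :=
    (le_iff_forall_count_le hM (principal_le_one_iff.2 hgb) (principal_le_one_iff.2 hb)).2
      fun p hp => by have := h p hp; rw [ord_eq hM hb hgb] at this; omega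
  simpa [mul_comm] using mem_principal.1 (principal_le_iff.1 hle)

lemma min_ord_le_ord (hM : M.IsCompletelyIntegrallyClosed) (hΓ : M.IsGroupOfFractions)
    (hp : p.IsMaximal) {g₁ g₂ g₃ : Γ} (h : g₃ ∈ M.vClosure {g₁, g₂}) :
    min (ord p g₁) (ord p g₂) ≤ ord p g₃ := by
  obtain ⟨b₁, hb₁, hgb₁⟩ := hΓ g₁
  obtain ⟨b₂, hb₂, hgb₂⟩ := hΓ g₂
  have hb : b₁ * b₂ ∈ M := M.mul_mem hb₁ hb₂
  have h₁ : g₁ * (b₁ * b₂) ∈ M := mul_assoc g₁ b₁ b₂ ▸ M.mul_mem hgb₁ hb₂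
  have h₂ : g₂ * (b₁ * b₂) ∈ M := mul_left_comm b₁ g₂ b₂ ▸ M.mul_mem hb₁ hgb₂
  have h₃ : g₃ * (b₁ * b₂) ∈ M.vClosure {g₁ * (b₁ * b₂), g₂ * (b₁ * b₂)} := fun c hc => by
    have : c * (b₁ * b₂) ∈ M.colon {g₁, g₂} := by
      rintro s (rfl | rfl)
      · rw [mul_right_comm, mul_assoc]; exact hc _ (.inl rfl)
      · rw [mul_right_comm, mul_assoc]; exact hc _ (.inr rfl)
    simpa only [mul_assoc, mul_comm c] using h _ this
  have h₃' : g₃ * (b₁ * b₂) ∈ M :=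
    vClosure_subset vClosure_coe (Set.insert_subset h₁ (Set.singleton_subset_iff.2 h₂)) h₃
  have := min_count_le_count hM hp h₁ h₂ h₃
  rw [ord_eq hM hb h₁, ord_eq hM hb h₂, ord_eq hM hb h₃']
  omega

end DivisorialIdeal

end

lemma IsIntegral.exists_pow_smul_pow_mem_range {A S : Type*} [CommRing A] [CommRing S]
    [Algebra A S] {x : S} (hx : IsIntegral A x) {t : A} (ht : t • x ∈ (algebraMap A S).range) :
    ∃ n : ℕ, ∀ m : ℕ, t ^ n • x ^ m ∈ (algebraMap A S).range := by
  obtain ⟨p, hp, hpx⟩ := hx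
  refine ⟨p.natDegree, fun m => ?_⟩
  -- reduce `x ^ m` modulo the monic relation `p`, which leaves only powers `x ^ i` with `i ≤ deg p`
  have hxm : x ^ m = Polynomial.aeval x (Polynomial.X ^ m %ₘ p) := by
    rw [Polynomial.aeval_modByMonic_eq_self_of_root hpx, map_pow, Polynomial.aeval_X]
  rw [hxm, Polynomial.aeval_eq_sum_range' (Nat.lt_succ_of_le
    (Polynomial.natDegree_modByMonic_le _ hp)), Finset.smul_sum]
  refine sum_mem fun i hi => ?_
  obtain ⟨k, hk⟩ : ∃ k, p.natDegree = k + i :=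
    ⟨_, (Nat.sub_add_cancel (Nat.lt_succ_iff.1 (Finset.mem_range.1 hi))).symm⟩
  have : t ^ (k + i) • ((Polynomial.X ^ m %ₘ p).coeff i • x ^ i) =
      algebraMap A S (t ^ k * (Polynomial.X ^ m %ₘ p).coeff i) * (t • x) ^ i := by
    simp only [Algebra.smul_def, map_mul, map_pow, mul_pow]
    ring
  rw [hk, this]
  exact mul_mem ⟨_, rfl⟩ (pow_mem ht i)

lemma Int.nonneg_of_forall_add_mul_nonneg {a b : ℤ} (h : ∀ m : ℕ, 0 ≤ a + m * b) : 0 ≤ b := by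
  by_contra! hb
  have := h (a.toNat + 1)
  have := Int.self_le_toNat a
  push_cast at *
  nlinarith

section GradedRing

open DirectSum SetLike

variable {𝒜}

lemma KIntegralRing.coe_decompose_eq_zero_of_mul (hint : KIntegralRing 𝒜) {s x : R} {k d : K}
    (hs : s ∈ 𝒜 k) (hs0 : s ≠ 0) (h : (decompose 𝒜 (s * x) (k + d) : R) = 0) :
    (decompose 𝒜 x d : R) = 0 :=
  (hint s _ ⟨k, hs⟩ ⟨d, coe_mem _⟩ (coe_decompose_mul_add_of_left_mem 𝒜 hs ▸ h)).resolve_left hs0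

lemma KIntegralRing.eq_zero_of_mul_eq_zero (hint : KIntegralRing 𝒜) {s x : R}
    (hs : IsHomogeneousElem 𝒜 s) (hs0 : s ≠ 0) (h : s * x = 0) : x = 0 := by
  classical
  obtain ⟨k, hk⟩ := hs
  rw [← sum_support_decompose 𝒜 x]
  exact Finset.sum_eq_zero fun d _ => hint.coe_decompose_eq_zero_of_mul hk hs0 (by simp [h])

lemma KIntegralRing.isHomogeneousElem_of_mul (hint : KIntegralRing 𝒜) {s r : R}
    (hs : IsHomogeneousElem 𝒜 s) (hs0 : s ≠ 0) (hsr : IsHomogeneousElem 𝒜 (s * r)) :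
    IsHomogeneousElem 𝒜 r := by
  classical
  obtain ⟨k, hk⟩ := hs
  obtain ⟨j, hj⟩ := hsr
  refine ⟨j - k, ?_⟩
  rw [← sum_support_decompose 𝒜 r]
  refine sum_mem fun d _ => ?_
  by_cases hd : d = j - k
  · exact hd ▸ coe_mem _
  · rw [hint.coe_decompose_eq_zero_of_mul hk hs0
      (decompose_of_mem_ne 𝒜 hj fun h => hd (by rw [h]; abel))]
    exact zero_mem _

lemma KIntegralRing.homNonzeroSub_le_nonZeroDivisors (hint : KIntegralRing 𝒜) :
    homNonzeroSub 𝒜 ≤ nonZeroDivisors R :=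
  Submonoid.closure_le.2 fun s ⟨hs, hs0⟩ => mem_nonZeroDivisors_iff_right.2 fun x hx =>
    hint.eq_zero_of_mul_eq_zero hs hs0 (mul_comm x s ▸ hx)

lemma KIntegralRing.algebraMap_injective (hint : KIntegralRing 𝒜) :
    Function.Injective (algebraMap R (QPlus 𝒜)) :=
  IsLocalization.injective _ hint.homNonzeroSub_le_nonZeroDivisors

variable (𝒜) in
lemma homFrac_one : HomFrac 𝒜 1 :=
  ⟨1, 1, one_mem _, isHomogeneousElem_one 𝒜, isHomogeneousElem_one 𝒜, Localization.mk_one.symm⟩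

lemma HomFrac.mul {x y : QPlus 𝒜} (hx : HomFrac 𝒜 x) (hy : HomFrac 𝒜 y) : HomFrac 𝒜 (x * y) := by
  obtain ⟨r₁, s₁, hs₁, hr₁, hs₁', rfl⟩ := hx
  obtain ⟨r₂, s₂, hs₂, hr₂, hs₂', rfl⟩ := hy
  exact ⟨r₁ * r₂, s₁ * s₂, mul_mem hs₁ hs₂, hr₁.mul hr₂, hs₁'.mul hs₂', Localization.mk_mul _ _ _ _⟩

lemma homFrac_algebraMap {r : R} (hr : IsHomogeneousElem 𝒜 r) :
    HomFrac 𝒜 (algebraMap R (QPlus 𝒜) r) :=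
  ⟨r, 1, one_mem _, hr, isHomogeneousElem_one 𝒜, (Localization.mk_one_eq_algebraMap r).symm⟩

-- Asking `u⁻¹` to be homogeneous too makes this a subgroup without `K`-integrality.
variable (𝒜) in
def homogeneousUnits : Subgroup (QPlus 𝒜)ˣ where
  carrier := {u | HomFrac 𝒜 u ∧ HomFrac 𝒜 ↑u⁻¹}
  one_mem' := ⟨homFrac_one 𝒜, homFrac_one 𝒜⟩
  mul_mem' {u v} hu hv := ⟨hu.1.mul hv.1, by rw [mul_inv, Units.val_mul]; exact hu.2.mul hv.2⟩
  inv_mem' {u} hu := ⟨hu.2, by rw [inv_inv]; exact hu.1⟩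

instance : CoeOut (homogeneousUnits 𝒜) (QPlus 𝒜) := ⟨fun g => ((g : (QPlus 𝒜)ˣ) : QPlus 𝒜)⟩

variable (𝒜) in
def integralHomogeneousUnits : Submonoid (homogeneousUnits 𝒜) where
  carrier := {g | ∃ r, algebraMap R (QPlus 𝒜) r = (g : QPlus 𝒜)}
  one_mem' := ⟨1, map_one _⟩
  mul_mem' := fun ⟨r, hr⟩ ⟨s, hs⟩ => ⟨r * s, by rw [map_mul, hr, hs]; rfl⟩

def homogeneousUnitsMk {x y : QPlus 𝒜} (hx : HomFrac 𝒜 x) (hy : HomFrac 𝒜 y) (hxy : x * y = 1) :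
    homogeneousUnits 𝒜 :=
  ⟨⟨x, y, hxy, mul_comm y x ▸ hxy⟩, hx, hy⟩

lemma HomFrac.exists_coe_eq {x : QPlus 𝒜} (hx : HomFrac 𝒜 x) (hx0 : x ≠ 0) :
    ∃ g : homogeneousUnits 𝒜, (g : QPlus 𝒜) = x := by
  obtain ⟨r, s, hs, hr, hs', rfl⟩ := hx
  have hr0 : r ≠ 0 := by rintro rfl; exact hx0 (Localization.mk_zero _)
  have hrM : r ∈ homNonzeroSub 𝒜 := Submonoid.subset_closure ⟨hr, hr0⟩
  refine ⟨homogeneousUnitsMk ⟨r, s, hs, hr, hs', rfl⟩ ⟨s, r, hrM, hs', hr, rfl⟩ ?_, rfl⟩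
  rw [Localization.mk_mul, show (⟨s, hs⟩ : homNonzeroSub 𝒜) * ⟨r, hrM⟩ = ⟨r * s, mul_mem hrM hs⟩
    by ext; exact mul_comm s r]
  exact Localization.mk_self (⟨r * s, mul_mem hrM hs⟩ : homNonzeroSub 𝒜)

lemma isGroupOfFractions_integralHomogeneousUnits :
    (integralHomogeneousUnits 𝒜).IsGroupOfFractions := by
  intro g
  obtain ⟨r, s, hs, hr, hs', hg⟩ := g.2.1
  refine ⟨homogeneousUnitsMk (homFrac_algebraMap hs') ⟨1, s, hs, isHomogeneousElem_one 𝒜, hs', rfl⟩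
    ?_, ⟨s, rfl⟩, ⟨r, ?_⟩⟩
  · rw [← Localization.mk_one_eq_algebraMap, Localization.mk_mul, one_mul, mul_one]
    exact Localization.mk_self ⟨s, hs⟩
  · change _ = (g : QPlus 𝒜) * algebraMap R (QPlus 𝒜) s
    rw [hg, Localization.mk_eq_mk', IsLocalization.mk'_spec]

lemma mem_vClosure_of_coe_add_eq {g₁ g₂ g₃ : homogeneousUnits 𝒜}
    (h : (g₁ : QPlus 𝒜) + g₂ = g₃) : g₃ ∈ (integralHomogeneousUnits 𝒜).vClosure {g₁, g₂} := by
  intro c hc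
  obtain ⟨r₁, hr₁⟩ := hc g₁ (.inl rfl)
  obtain ⟨r₂, hr₂⟩ := hc g₂ (.inr rfl)
  refine ⟨r₁ + r₂, ?_⟩
  change _ = (g₃ : QPlus 𝒜) * (c : QPlus 𝒜)
  change _ = (c : QPlus 𝒜) * (g₁ : QPlus 𝒜) at hr₁
  change _ = (c : QPlus 𝒜) * (g₂ : QPlus 𝒜) at hr₂
  rw [map_add, hr₁, hr₂, ← h]
  ring

lemma KIntegralRing.isHomogeneousElem_of_algebraMap_eq_coe [Nontrivial R] (hint : KIntegralRing 𝒜)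
    {r : R} {g : homogeneousUnits 𝒜}
    (hr : algebraMap R (QPlus 𝒜) r = (g : QPlus 𝒜)) : IsHomogeneousElem 𝒜 r := by
  obtain ⟨a, s, hs, ha, hs', hg⟩ := g.2.1
  rw [hg, Localization.mk_eq_mk', IsLocalization.eq_mk'_iff_mul_eq, ← map_mul] at hr
  refine hint.isHomogeneousElem_of_mul hs' (nonZeroDivisors.ne_zero
    (hint.homNonzeroSub_le_nonZeroDivisors hs)) ?_
  rw [mul_comm, hint.algebraMap_injective hr]
  exact ha

lemma KNoetherian.wellFoundedGT (hnoeth : KNoetherian 𝒜) : WellFoundedGT (HomogeneousIdeal 𝒜) := by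
  refine wellFoundedGT_iff_monotone_chain_condition.2 fun f => ?_
  obtain ⟨n, hn⟩ := hnoeth ⟨fun n => (f n).toIdeal, fun _ _ h => f.mono h⟩
    fun n => (f n).isHomogeneous
  exact ⟨n, fun m hm => HomogeneousIdeal.toIdeal_injective (hn m hm).symm⟩

namespace DivisorialIdeal

variable (𝒜) in
def toHomogeneousIdeal (A : DivisorialIdeal (integralHomogeneousUnits 𝒜)) : HomogeneousIdeal 𝒜 :=
  ⟨Ideal.span {r | IsHomogeneousElem 𝒜 r ∧
      ∃ g ∈ A, algebraMap R (QPlus 𝒜) r = (g : QPlus 𝒜)},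
    Ideal.homogeneous_span _ _ fun _ hr => hr.1⟩

lemma mem_of_mem_toHomogeneousIdeal {A : DivisorialIdeal (integralHomogeneousUnits 𝒜)} {r : R}
    (hr : r ∈ toHomogeneousIdeal 𝒜 A) {b : homogeneousUnits 𝒜}
    (hb : algebraMap R (QPlus 𝒜) r = (b : QPlus 𝒜)) : b ∈ A := by
  rw [← SetLike.mem_coe, ← A.vClosure_coe_eq]
  intro c hc
  have key : ∀ x ∈ (toHomogeneousIdeal 𝒜 A).toIdeal, ∃ t, algebraMap R (QPlus 𝒜) t =
      algebraMap R (QPlus 𝒜) x * (c : QPlus 𝒜) := by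
    intro x hx
    induction hx using Submodule.span_induction with
    | mem y hy =>
      obtain ⟨-, g, hg, hgy⟩ := hy
      obtain ⟨t, ht⟩ := hc g hg
      exact ⟨t, by rw [ht, hgy, mul_comm]; rfl⟩
    | zero => exact ⟨0, by simp⟩
    | add x y _ _ hx hy =>
      obtain ⟨t, ht⟩ := hx
      obtain ⟨u, hu⟩ := hy
      exact ⟨t + u, by rw [map_add, map_add, ht, hu, add_mul]⟩
    | smul a x _ hx =>
      obtain ⟨t, ht⟩ := hx
      exact ⟨a * t, by rw [smul_eq_mul, map_mul, map_mul, ht, mul_assoc]⟩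
  obtain ⟨t, ht⟩ := key r hr
  exact ⟨t, by rw [ht, hb]; rfl⟩

lemma strictMono_toHomogeneousIdeal [Nontrivial R] (hint : KIntegralRing 𝒜) :
    StrictMono fun A : Set.Iic (1 : DivisorialIdeal (integralHomogeneousUnits 𝒜)) =>
      toHomogeneousIdeal 𝒜 A.1 := by
  intro A B hAB
  refine lt_of_le_of_ne (fun r hr => ?_) fun h => ?_
  · exact Ideal.span_mono (by rintro r' ⟨hr', g, hg, hgr⟩; exact ⟨hr', g, hAB.le hg, hgr⟩) hr
  · obtain ⟨b, hbB, hbA⟩ := SetLike.exists_of_lt (show A.1 < B.1 from hAB)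
    obtain ⟨r, hr⟩ := B.2 hbB
    have hrB : r ∈ toHomogeneousIdeal 𝒜 B.1 :=
      Ideal.subset_span ⟨hint.isHomogeneousElem_of_algebraMap_eq_coe hr, b, hbB, hr⟩
    have h' : toHomogeneousIdeal 𝒜 A.1 = toHomogeneousIdeal 𝒜 B.1 := h
    exact hbA (mem_of_mem_toHomogeneousIdeal (h' ▸ hrB) hr)

end DivisorialIdeal

lemma KNoetherian.wellFoundedGT_Iic_one [Nontrivial R] (hnoeth : KNoetherian 𝒜)
    (hint : KIntegralRing 𝒜) :
    WellFoundedGT (Set.Iic (1 : DivisorialIdeal (integralHomogeneousUnits 𝒜))) :=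
  have := hnoeth.wellFoundedGT
  (DivisorialIdeal.strictMono_toHomogeneousIdeal hint).wellFoundedGT

/-- A homogeneous unit all of whose powers have a common denominator satisfies, by the graded
chain condition, an integral equation over `R`; `K`-normality then puts it in `R`. -/
lemma KNormalRing.isCompletelyIntegrallyClosed [Nontrivial R] (hnorm : KNormalRing 𝒜)
    (hint : KIntegralRing 𝒜) (hnoeth : KNoetherian 𝒜) :
    (integralHomogeneousUnits 𝒜).IsCompletelyIntegrallyClosed := by
  rintro g ⟨c, hc⟩
  let I : ℕ →o Ideal R := ⟨fun n => Ideal.span {r | IsHomogeneousElem 𝒜 r ∧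
      ∃ k ≤ n, algebraMap R (QPlus 𝒜) r = ((c * g ^ k : homogeneousUnits 𝒜) : QPlus 𝒜)},
    monotone_nat_of_le_succ fun n => Ideal.span_mono fun _ ⟨hr, k, hk, h⟩ =>
      ⟨hr, k, hk.trans n.le_succ, h⟩⟩
  obtain ⟨N, hN⟩ := hnoeth I fun n => Ideal.homogeneous_span _ _ fun _ hr => hr.1
  obtain ⟨r, hr⟩ := hc (N + 1)
  have hrI : r ∈ I N := hN (N + 1) N.le_succ ▸ Ideal.subset_span
    ⟨hint.isHomogeneousElem_of_algebraMap_eq_coe hr, N + 1, le_rfl, hr⟩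
  set γ : QPlus 𝒜 := (g : QPlus 𝒜)
  set κ : QPlus 𝒜 := (c : QPlus 𝒜)
  have hspan : algebraMap R (QPlus 𝒜) r ∈
      Submodule.span R (Set.range fun k : Fin (N + 1) => κ * γ ^ (k : ℕ)) := by
    refine (Submodule.span_le (p := (Submodule.span R _).comap (Algebra.linearMap R _))).2 ?_ hrI
    rintro r' ⟨-, k, hk, hr'⟩
    exact Submodule.subset_span ⟨⟨k, Nat.lt_succ_of_le hk⟩, by simp [hr', κ, γ]⟩
  obtain ⟨t, ht⟩ := (Submodule.mem_span_range_iff_exists_fun R).1 hspan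
  have hγ : γ ^ (N + 1) = ∑ k : Fin (N + 1), algebraMap R (QPlus 𝒜) (t k) * γ ^ (k : ℕ) := by
    refine (c : (QPlus 𝒜)ˣ).isUnit.mul_left_cancel ?_
    change κ * _ = κ * _
    rw [Finset.mul_sum]
    have : κ * γ ^ (N + 1) = algebraMap R (QPlus 𝒜) r := by simp [hr, κ, γ]
    rw [this, ← ht]
    refine Finset.sum_congr rfl fun k _ => ?_
    rw [Algebra.smul_def]
    ring
  have hγint : IsIntegral R γ := by
    refine ⟨Polynomial.X ^ (N + 1) - ∑ k : Fin (N + 1), Polynomial.C (t k) * Polynomial.X ^ (k : ℕ),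
      Polynomial.monic_X_pow_sub (Polynomial.degree_sum_fin_lt t), ?_⟩
    simp [Polynomial.eval₂_finsetSum, hγ]
  exact hnorm γ g.2.1 hγint

lemma IsKVal.map_coe_mul [Nontrivial (QPlus 𝒜)] {ν : QPlus 𝒜 → ℤ} (hν : IsKVal 𝒜 ν)
    (g h : homogeneousUnits 𝒜) :
    ν ((g * h : homogeneousUnits 𝒜) : QPlus 𝒜) =
      ν (g : QPlus 𝒜) + ν (h : QPlus 𝒜) :=
  hν.1 _ _ g.2.1 h.2.1 (Units.ne_zero _) (Units.ne_zero _)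

lemma IsKVal.map_coe_pow [Nontrivial (QPlus 𝒜)] {ν : QPlus 𝒜 → ℤ} (hν : IsKVal 𝒜 ν)
    (g : homogeneousUnits 𝒜) (m : ℕ) :
    ν ((g ^ m : homogeneousUnits 𝒜) : QPlus 𝒜) =
      m * ν (g : QPlus 𝒜) := by
  induction m with
  | zero => simpa using hν.map_coe_mul 1 1
  | succ m ih => rw [pow_succ, hν.map_coe_mul, ih]; push_cast; ring

lemma IsKKrullRing.kNormalRing [Nontrivial R] (hk : IsKKrullRing 𝒜) (hint : KIntegralRing 𝒜) :
    KNormalRing 𝒜 := by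
  have := hint.algebraMap_injective.nontrivial
  obtain ⟨ι, ν, hν, -, hmem⟩ := hk
  intro x hx hxint
  by_cases hx0 : x = 0
  · exact ⟨0, by rw [map_zero, hx0]⟩
  refine (hmem x hx hx0).1 fun i => ?_
  obtain ⟨γ, rfl⟩ := hx.exists_coe_eq hx0
  obtain ⟨a, s, hs, ha, hs', hγ⟩ := hx
  obtain ⟨σ, hσ⟩ := (homFrac_algebraMap (𝒜 := 𝒜) hs').exists_coe_eq
    ((IsLocalization.map_units (QPlus 𝒜) ⟨s, hs⟩).ne_zero)
  have hsγ : s • (γ : QPlus 𝒜) ∈ (algebraMap R (QPlus 𝒜)).range :=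
    ⟨a, by rw [hγ, Localization.mk_eq_mk', Algebra.smul_def, mul_comm, IsLocalization.mk'_spec]⟩
  obtain ⟨n, hn⟩ := hxint.exists_pow_smul_pow_mem_range hsγ
  refine Int.nonneg_of_forall_add_mul_nonneg (a := n * ν i (σ : QPlus 𝒜)) fun m => ?_
  have hmem' := (hmem _ (σ ^ n * γ ^ m).2.1 (Units.ne_zero _)).2 (by
    simpa [Algebra.smul_def, hσ] using hn m)
  have := hmem' i
  rwa [(hν i).map_coe_mul, (hν i).map_coe_pow, (hν i).map_coe_pow] at this

open Classical in
-- `0` off the homogeneous units, where no condition is imposed.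
noncomputable def homValuation (p : DivisorialIdeal (integralHomogeneousUnits 𝒜)) (x : QPlus 𝒜) :
    ℤ :=
  if h : ∃ g : homogeneousUnits 𝒜, (g : QPlus 𝒜) = x then p.ord h.choose else 0

lemma homValuation_coe (p : DivisorialIdeal (integralHomogeneousUnits 𝒜)) (g : homogeneousUnits 𝒜) :
    homValuation p (g : QPlus 𝒜) = p.ord g := by
  have h : ∃ g' : homogeneousUnits 𝒜,
      (g' : QPlus 𝒜) = g := ⟨g, rfl⟩
  rw [homValuation, dif_pos h, Subtype.ext (Units.ext h.choose_spec)]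

lemma KNormalRing.isKKrullRing [Nontrivial R] (hnorm : KNormalRing 𝒜) (hint : KIntegralRing 𝒜)
    (hnoeth : KNoetherian 𝒜) : IsKKrullRing 𝒜 := by
  have := hint.algebraMap_injective.nontrivial
  have := hnoeth.wellFoundedGT_Iic_one hint
  have hM := hnorm.isCompletelyIntegrallyClosed hint hnoeth
  have hΓ := isGroupOfFractions_integralHomogeneousUnits (𝒜 := 𝒜)
  refine ⟨{p : DivisorialIdeal (integralHomogeneousUnits 𝒜) // p.IsMaximal},
    fun p => homValuation p.1, fun p => ⟨?_, ?_, fun n => ?_⟩, fun x hx hx0 => ?_,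
    fun x hx hx0 => ?_⟩
  · intro x y hx hy hx0 hy0
    obtain ⟨g, rfl⟩ := hx.exists_coe_eq hx0
    obtain ⟨h, rfl⟩ := hy.exists_coe_eq hy0
    dsimp only
    rw [← Units.val_mul, ← Subgroup.coe_mul, homValuation_coe, homValuation_coe,
      homValuation_coe, DivisorialIdeal.ord_mul hM hΓ]
  · intro x y hx hy hxy hx0 hy0 hxy0
    obtain ⟨g₁, rfl⟩ := hx.exists_coe_eq hx0
    obtain ⟨g₂, rfl⟩ := hy.exists_coe_eq hy0
    obtain ⟨g₃, hg₃⟩ := hxy.exists_coe_eq hxy0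
    dsimp only
    rw [← hg₃, homValuation_coe, homValuation_coe, homValuation_coe]
    exact DivisorialIdeal.min_ord_le_ord hM hΓ p.2 (mem_vClosure_of_coe_add_eq hg₃.symm)
  · obtain ⟨g, hg⟩ := DivisorialIdeal.ord_surjective hM hΓ p.2 n
    exact ⟨_, g.2.1, Units.ne_zero _, by dsimp only; rw [homValuation_coe, hg]⟩
  · obtain ⟨g, rfl⟩ := hx.exists_coe_eq hx0
    refine ((DivisorialIdeal.finite_setOf_ord_ne_zero hM hΓ g).preimage
      Subtype.val_injective.injOn).subset fun p hp => ?_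
    simpa [homValuation_coe] using hp
  · obtain ⟨g, rfl⟩ := hx.exists_coe_eq hx0
    simp only [homValuation_coe]
    exact Subtype.forall.trans (DivisorialIdeal.mem_iff_forall_ord_nonneg hM hΓ).symm

end GradedRing

/-- A `K`-noetherian `K`-integral graded ring is a `K`-Krull ring if and only if
it is `K`-normal. -/
theorem stmt_14 [Nontrivial R] (hint : KIntegralRing 𝒜) (hnoeth : KNoetherian 𝒜) :
    IsKKrullRing 𝒜 ↔ KNormalRing 𝒜 :=
  ⟨fun hk => hk.kNormalRing hint, fun hn => hn.isKKrullRing hint hnoeth⟩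

end
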